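/- arXiv:1804.01740 — 11 statements merged into one kernel-verified Lean document; each statement's English description precedes it below -/
import Mathlib

section
/- If q ≤ 2n/3 is an odd positive integer, then the interval [n+1, 2n] contains an odd multiple of q. -/
theorem stmt_5 (n q : ℕ) (hn : 0 < n) (hq : Odd q) (hq0 : 0 < q)
    (hq3 : 3 * q ≤ 2 * n) :
    ∃ m ∈ Finset.Icc (n + 1) (2 * n), Odd m ∧ q ∣ m := by
  set k := 2 * n / q with hk
  have h1 : q * k + 2 * n % q = 2 * n := Nat.div_add_mod (2 * n) q
  have h2 : 2 * n % q < q := Nat.mod_lt _ hq0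
  have hk3 : 3 ≤ k := (Nat.le_div_iff_mul_le hq0).mpr hq3
  have hkq_le : q * k ≤ 2 * n := by omega
  have hkq_gt : 2 * n < q * k + q := by omega
  have hqn : q ≤ n := by omega
  rcases Nat.even_or_odd k with he | ho
  · -- k even, so k ≥ 4, take m = q * (k - 1)
    have hk4 : 4 ≤ k := by
      obtain ⟨c, hc⟩ := he; omega
    have h4q : q * 4 ≤ q * k := Nat.mul_le_mul_left q hk4
    have h2qn : 2 * q ≤ n := by linarith
    have heq : q * (k - 1) + q * 1 = q * k := by
      rw [← Nat.mul_add]; congr 1; omega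
    refine ⟨q * (k - 1), Finset.mem_Icc.mpr ⟨by linarith, by linarith⟩, ?_, dvd_mul_right _ _⟩
    exact hq.mul (Nat.Even.sub_odd (by omega) he odd_one)
  · -- k odd, take m = q * k
    refine ⟨q * k, Finset.mem_Icc.mpr ⟨by linarith, hkq_le⟩, hq.mul ho, dvd_mul_right _ _⟩
end

section
/- Every primitive subset of {1,...,2n} with exactly n elements contains every odd integer in the interval [n+1, 2n]. -/
private lemma odd_part_dvd {a b : ℕ} (_ha : a ≠ 0) (_hb : b ≠ 0)
    (h : ordCompl[2] a = ordCompl[2] b) (hv : a.factorization 2 ≤ b.factorization 2) :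
    a ∣ b := by
  have key : 2 ^ a.factorization 2 * ordCompl[2] a ∣ 2 ^ b.factorization 2 * ordCompl[2] b := by
    rw [h]; exact mul_dvd_mul_right (pow_dvd_pow 2 hv) _
  rwa [Nat.ordProj_mul_ordCompl_eq_self a 2, Nat.ordProj_mul_ordCompl_eq_self b 2] at key

theorem stmt_7 (n : ℕ) (hn : 0 < n) (S : Finset ℕ)
    (hS : S ⊆ Finset.Icc 1 (2 * n)) (hcard : S.card = n)
    (hprim : ∀ u ∈ S, ∀ v ∈ S, u ≠ v → ¬ u ∣ v) :
    ∀ m : ℕ, Odd m → n + 1 ≤ m → m ≤ 2 * n → m ∈ S := by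
  intro m hm hm1 hm2
  have hpos : ∀ s ∈ S, 1 ≤ s ∧ s ≤ 2 * n := fun s hs => Finset.mem_Icc.mp (hS hs)
  set f : ℕ → ℕ := fun k => ordCompl[2] k with hf
  have hinj : Set.InjOn f S := by
    intro a ha b hb hab
    by_contra hne
    have ha0 : a ≠ 0 := by have := (hpos a ha).1; omega
    have hb0 : b ≠ 0 := by have := (hpos b hb).1; omega
    rcases le_total (a.factorization 2) (b.factorization 2) with h | h
    · exact hprim a ha b hb hne (odd_part_dvd ha0 hb0 hab h)
    · exact hprim b hb a ha (Ne.symm hne) (odd_part_dvd hb0 ha0 hab.symm h)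
  -- the set of odd numbers in [1, 2n]
  set O : Finset ℕ := (Finset.range n).image (fun k => 2 * k + 1) with hO
  have hOcard : O.card = n := by
    rw [hO, Finset.card_image_of_injective _ (fun x y h => by omega), Finset.card_range]
  have hsub : S.image f ⊆ O := by
    intro x hx
    obtain ⟨s, hs, rfl⟩ := Finset.mem_image.mp hx
    have hs0 : s ≠ 0 := by have := (hpos s hs).1; omega
    have hodd : ¬ 2 ∣ f s := Nat.not_dvd_ordCompl Nat.prime_two hs0
    have hle : f s ≤ s := Nat.ordCompl_le s 2
    have h1 : 1 ≤ f s := Nat.ordCompl_pos 2 hs0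
    have h2 : f s ≤ 2 * n := le_trans hle (hpos s hs).2
    rw [hO]
    refine Finset.mem_image.mpr ⟨f s / 2, Finset.mem_range.mpr ?_, ?_⟩ <;> omega
  have hcard' : (S.image f).card = n := by
    rw [Finset.card_image_of_injOn hinj, hcard]
  have heq : S.image f = O := Finset.eq_of_subset_of_card_le hsub (by omega)
  have hmO : m ∈ O := by
    obtain ⟨k, hk⟩ := hm
    exact Finset.mem_image.mpr ⟨k, Finset.mem_range.mpr (by omega), by omega⟩
  rw [← heq] at hmO
  obtain ⟨s, hs, hfs⟩ := Finset.mem_image.mp hmO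
  have hs0 : s ≠ 0 := by have := (hpos s hs).1; omega
  have hseq : 2 ^ s.factorization 2 * m = s := by
    rw [← hfs]; exact Nat.ordProj_mul_ordCompl_eq_self s 2
  have hv0 : s.factorization 2 = 0 := by
    by_contra hv
    have : 2 ≤ 2 ^ s.factorization 2 := Nat.one_lt_two_pow (by omega)
    have := (hpos s hs).2
    nlinarith [hseq]
  rw [hv0, pow_zero, one_mul] at hseq
  rw [hseq]; exact hs
end

section
/- No primitive subset of {1,...,2n} with exactly n elements contains any odd integer q with q ≤ 2n/3. -/
theorem stmt_8 (n : ℕ) (hn : 0 < n) (S : Finset ℕ)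
    (hS : S ⊆ Finset.Icc 1 (2 * n)) (hcard : S.card = n)
    (hprim : ∀ u ∈ S, ∀ v ∈ S, u ≠ v → ¬ u ∣ v) :
    ∀ q : ℕ, Odd q → 3 * q ≤ 2 * n → q ∉ S := by
  intro q hq hq3 hqS
  have hq1 : 1 ≤ q := hq.pos
  have hpos : ∀ m ∈ S, 0 < m := fun m hm => (Finset.mem_Icc.mp (hS hm)).1
  have key : ∀ a b : ℕ, (a / 2 ^ a.factorization 2) = (b / 2 ^ b.factorization 2) →
      a.factorization 2 ≤ b.factorization 2 → a ∣ b := by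
    intro a b hc h
    calc a = 2 ^ a.factorization 2 * (a / 2 ^ a.factorization 2) :=
          (Nat.ordProj_mul_ordCompl_eq_self a 2).symm
      _ ∣ 2 ^ b.factorization 2 * (b / 2 ^ b.factorization 2) := by
          rw [hc]; exact mul_dvd_mul (pow_dvd_pow 2 h) dvd_rfl
      _ = b := Nat.ordProj_mul_ordCompl_eq_self b 2
  have hinj : Set.InjOn (fun m => (m / 2 ^ m.factorization 2)) S := by
    intro a ha b hb hab
    by_contra hne
    rcases le_total (a.factorization 2) (b.factorization 2) with h | h
    · exact hprim a ha b hb hne (key a b hab h)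
    · exact hprim b hb a ha (Ne.symm hne) (key b a hab.symm h)
  set T := (Finset.Icc 1 (2 * n)).filter (fun m => Odd m) with hT
  have hTcard : T.card = n := by
    have heq : T = (Finset.range n).image (fun k => 2 * k + 1) := by
      ext m
      simp only [hT, Finset.mem_filter, Finset.mem_Icc, Nat.odd_iff,
        Finset.mem_image, Finset.mem_range]
      constructor
      · rintro ⟨⟨h1, h2⟩, h3⟩; exact ⟨m / 2, by omega, by omega⟩
      · rintro ⟨k, hk, rfl⟩; omega
    rw [heq, Finset.card_image_of_injective _ (fun a b hab => by omega),
      Finset.card_range]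
  have himg : S.image (fun m => (m / 2 ^ m.factorization 2)) = T := by
    apply Finset.eq_of_subset_of_card_le
    · intro x hx
      rcases Finset.mem_image.mp hx with ⟨m, hm, rfl⟩
      have hm0 : m ≠ 0 := (hpos m hm).ne'
      have hodd : Odd ((m / 2 ^ m.factorization 2)) := by
        rw [Nat.odd_iff, ← Nat.two_dvd_ne_zero]
        exact Nat.not_dvd_ordCompl Nat.prime_two hm0
      refine Finset.mem_filter.mpr ⟨Finset.mem_Icc.mpr ⟨?_, ?_⟩, hodd⟩
      · exact Nat.ordCompl_pos 2 hm0
      · exact le_trans (Nat.ordCompl_le m 2) (Finset.mem_Icc.mp (hS hm)).2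
    · rw [Finset.card_image_of_injOn hinj, hcard, hTcard]
  have h3qT : 3 * q ∈ T := by
    refine Finset.mem_filter.mpr ⟨Finset.mem_Icc.mpr ⟨by omega, hq3⟩, ?_⟩
    rcases hq with ⟨k, hk⟩
    exact ⟨3 * k + 1, by omega⟩
  rw [← himg] at h3qT
  rcases Finset.mem_image.mp h3qT with ⟨m, hm, hmq⟩
  have hdvd : q ∣ m := dvd_trans ⟨3, by ring⟩ (hmq ▸ Nat.ordCompl_dvd m 2)
  have hle : 3 * q ≤ m := hmq ▸ Nat.ordCompl_le m 2
  exact hprim q hqS m hm (by omega) hdvd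
end

section
/- If q is an odd integer with n/2 < q ≤ 2n/3, then every primitive subset of {1,...,2n} with exactly n elements contains 2q. -/
theorem stmt_9 (n q : ℕ) (hn : 0 < n) (hq : Odd q) (h1 : n < 2 * q)
    (h2 : 3 * q ≤ 2 * n) (S : Finset ℕ)
    (hS : S ⊆ Finset.Icc 1 (2 * n)) (hcard : S.card = n)
    (hprim : ∀ u ∈ S, ∀ v ∈ S, u ≠ v → ¬ u ∣ v) :
    2 * q ∈ S := by
  have hq1 : 1 ≤ q := by
    rcases hq with ⟨k, rfl⟩; omega
  set f : ℕ → ℕ := fun x => ordCompl[2] x with hf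
  have hx0 : ∀ x ∈ S, x ≠ 0 := by
    intro x hx
    have := hS hx
    simp only [Finset.mem_Icc] at this
    omega
  have hfact : ∀ x ∈ S, 2 ^ (x.factorization 2) * f x = x := by
    intro x hx
    exact Nat.ordProj_mul_ordCompl_eq_self x 2
  have hfodd : ∀ x ∈ S, Odd (f x) := by
    intro x hx
    have := Nat.not_dvd_ordCompl Nat.prime_two (hx0 x hx)
    simpa [Nat.odd_iff, Nat.two_dvd_ne_zero] using this
  have hinj : Set.InjOn f S := by
    intro x hx y hy hxy
    by_contra hne
    rcases le_total (x.factorization 2) (y.factorization 2) with h | h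
    · refine hprim x hx y hy hne ?_
      calc x = 2 ^ (x.factorization 2) * f x := (hfact x hx).symm
        _ ∣ 2 ^ (y.factorization 2) * f y :=
          mul_dvd_mul (pow_dvd_pow 2 h) (hxy ▸ dvd_refl _)
        _ = y := hfact y hy
    · refine hprim y hy x hx (Ne.symm hne) ?_
      calc y = 2 ^ (y.factorization 2) * f y := (hfact y hy).symm
        _ ∣ 2 ^ (x.factorization 2) * f x :=
          mul_dvd_mul (pow_dvd_pow 2 h) (hxy ▸ dvd_refl _)
        _ = x := hfact x hx
  set T : Finset ℕ := (Finset.Icc 1 (2 * n)).filter (fun m => Odd m) with hT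
  have hTcard : T.card = n := by
    have : T = (Finset.range n).image (fun k => 2 * k + 1) := by
      ext m
      simp only [hT, Finset.mem_filter, Finset.mem_Icc, Nat.odd_iff,
        Finset.mem_image, Finset.mem_range]
      constructor
      · rintro ⟨⟨ha, hb⟩, hc⟩
        exact ⟨m / 2, by omega, by omega⟩
      · rintro ⟨k, hk, rfl⟩
        omega
    rw [this, Finset.card_image_of_injective _ (fun a b hab => by omega),
      Finset.card_range]
  have hsub : S.image f ⊆ T := by
    intro m hm
    rcases Finset.mem_image.mp hm with ⟨x, hx, rfl⟩
    have hd : f x ∣ x := Nat.ordCompl_dvd x 2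
    have hx2 := hS hx
    simp only [Finset.mem_Icc] at hx2
    have hle : f x ≤ x := Nat.le_of_dvd (by omega) hd
    have hpos : 1 ≤ f x := Nat.ordCompl_pos 2 (hx0 x hx)
    simp only [hT, Finset.mem_filter, Finset.mem_Icc]
    exact ⟨⟨hpos, le_trans hle hx2.2⟩, hfodd x hx⟩
  have himg : S.image f = T := by
    apply Finset.eq_of_subset_of_card_le hsub
    rw [hTcard, Finset.card_image_of_injOn hinj, hcard]
  -- extract element with odd part m, for odd m in range
  have hex : ∀ m, Odd m → 1 ≤ m → m ≤ 2 * n → ∃ x ∈ S, 2 ^ (x.factorization 2) * m = x := by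
    intro m hmo hm1 hm2
    have : m ∈ T := by
      simp only [hT, Finset.mem_filter, Finset.mem_Icc]
      exact ⟨⟨hm1, hm2⟩, hmo⟩
    rw [← himg] at this
    rcases Finset.mem_image.mp this with ⟨x, hx, hfx⟩
    exact ⟨x, hx, by rw [← hfx]; exact hfact x hx⟩
  -- element with odd part q
  rcases hex q hq hq1 (by omega) with ⟨x, hx, hxe⟩
  have hx2 := hS hx
  simp only [Finset.mem_Icc] at hx2
  have ha : x.factorization 2 ≤ 1 := by
    by_contra h
    push_neg at h
    have : (4 : ℕ) ≤ 2 ^ (x.factorization 2) := by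
      calc (4 : ℕ) = 2 ^ 2 := rfl
        _ ≤ 2 ^ (x.factorization 2) := Nat.pow_le_pow_right (by norm_num) h
    nlinarith [hx2.2]
  interval_cases h : x.factorization 2
  · -- x = q, derive contradiction from 3q
    exfalso
    have hxq : x = q := by simpa using hxe.symm
    have h3odd : Odd (3 * q) := by
      rcases hq with ⟨k, rfl⟩; exact ⟨3 * k + 1, by ring⟩
    rcases hex (3 * q) h3odd (by omega) h2 with ⟨y, hy, hye⟩
    have hy2 := hS hy
    simp only [Finset.mem_Icc] at hy2
    have hb : y.factorization 2 = 0 := by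
      by_contra hb
      have : (2 : ℕ) ≤ 2 ^ (y.factorization 2) := by
        calc (2 : ℕ) = 2 ^ 1 := rfl
          _ ≤ 2 ^ (y.factorization 2) := Nat.pow_le_pow_right (by norm_num) (by omega)
      nlinarith [hy2.2]
    have hyq : y = 3 * q := by rw [hb] at hye; simpa using hye.symm
    have hne : x ≠ y := by omega
    exact hprim x hx y hy hne (by rw [hxq, hyq]; exact ⟨3, by ring⟩)
  · have : x = 2 * q := by rw [← hxe]; ring
    rwa [← this]
end

section
/- Every integer congruent to 2 modulo 4 lying in the interval [n+1, 4n/3] belongs to every primitive subset of {1,...,2n} with exactly n elements. -/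
lemma ordCompl2_spec (x : ℕ) : 2 ^ (x.factorization 2) * ordCompl[2] x = x :=
  Nat.ordProj_mul_ordCompl_eq_self x 2

lemma dvd_of_ordCompl2_eq {x y : ℕ} (hx : x ≠ 0) (hy : y ≠ 0)
    (h : ordCompl[2] x = ordCompl[2] y) : x ∣ y ∨ y ∣ x := by
  rcases le_total (x.factorization 2) (y.factorization 2) with hle | hle
  · left
    have hx' := ordCompl2_spec x
    have hy' := ordCompl2_spec y
    rw [← hx', ← hy', h]
    exact mul_dvd_mul_right (pow_dvd_pow 2 hle) _
  · right
    have hx' := ordCompl2_spec x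
    have hy' := ordCompl2_spec y
    rw [← hx', ← hy', h]
    exact mul_dvd_mul_right (pow_dvd_pow 2 hle) _

theorem stmt_10 (n : ℕ) (hn : 0 < n) (S : Finset ℕ)
    (hS : S ⊆ Finset.Icc 1 (2 * n)) (hcard : S.card = n)
    (hprim : ∀ u ∈ S, ∀ v ∈ S, u ≠ v → ¬ u ∣ v) :
    ∀ m : ℕ, m % 4 = 2 → n + 1 ≤ m → 3 * m ≤ 4 * n → m ∈ S := by
  intro m hm4 hm1 hm2
  have hSmem : ∀ s ∈ S, 1 ≤ s ∧ s ≤ 2 * n := by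
    intro s hs
    exact Finset.mem_Icc.mp (hS hs)
  set T : Finset ℕ := (Finset.Icc 1 (2 * n)).filter (fun k => k % 2 = 1) with hTdef
  have hTcard : T.card = n := by
    have hTeq : T = (Finset.range n).image (fun i => 2 * i + 1) := by
      ext k
      simp only [hTdef, Finset.mem_filter, Finset.mem_Icc, Finset.mem_image, Finset.mem_range]
      constructor
      · rintro ⟨⟨h1, h2⟩, h3⟩
        exact ⟨k / 2, by omega, by omega⟩
      · rintro ⟨i, hi, rfl⟩
        omega
    rw [hTeq, Finset.card_image_of_injective _ (fun a b hab => by omega), Finset.card_range]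
  -- the image of S under ordCompl is exactly T
  have himg : S.image (fun s => ordCompl[2] s) = T := by
    apply Finset.eq_of_subset_of_card_le
    · intro k hk
      obtain ⟨s, hs, rfl⟩ := Finset.mem_image.mp hk
      obtain ⟨h1, h2⟩ := hSmem s hs
      have hs0 : s ≠ 0 := by omega
      have hodd : ¬ 2 ∣ ordCompl[2] s := Nat.not_dvd_ordCompl Nat.prime_two hs0
      have hdvd : ordCompl[2] s ∣ s := Nat.ordCompl_dvd s 2
      have hle : ordCompl[2] s ≤ s := Nat.le_of_dvd (by omega) hdvd
      have hpos : 0 < ordCompl[2] s := Nat.ordCompl_pos 2 hs0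
      simp only [hTdef, Finset.mem_filter, Finset.mem_Icc]
      refine ⟨⟨hpos, le_trans hle h2⟩, ?_⟩
      omega
    · rw [hTcard]
      have hinj : Set.InjOn (fun s => ordCompl[2] s) S := by
        intro a ha b hb hab
        by_contra hne
        obtain ⟨ha1, _⟩ := hSmem a ha
        obtain ⟨hb1, _⟩ := hSmem b hb
        rcases dvd_of_ordCompl2_eq (by omega) (by omega) hab with h | h
        · exact hprim a ha b hb hne h
        · exact hprim b hb a ha (Ne.symm hne) h
      rw [Finset.card_image_of_injOn hinj, hcard]
  have hsurj : ∀ k ∈ T, ∃ s ∈ S, ordCompl[2] s = k := by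
    intro k hk
    rw [← himg] at hk
    obtain ⟨s, hs, hks⟩ := Finset.mem_image.mp hk
    exact ⟨s, hs, hks⟩
  set k := m / 2 with hkdef
  have hmk : m = 2 * k := by omega
  have hkodd : k % 2 = 1 := by omega
  -- first: 3*k ∈ S
  have h3kT : 3 * k ∈ T := by
    simp only [hTdef, Finset.mem_filter, Finset.mem_Icc]
    omega
  obtain ⟨s, hsS, hs3⟩ := hsurj (3 * k) h3kT
  have hs3k : s = 3 * k := by
    obtain ⟨h1, h2⟩ := hSmem s hsS
    have hdvd : 3 * k ∣ s := hs3 ▸ Nat.ordCompl_dvd s 2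
    obtain ⟨t, ht⟩ := hdvd
    have ht1 : t = 1 := by
      rcases Nat.lt_or_ge t 2 with h | h
      · have : t = 0 ∨ t = 1 := by omega
        rcases this with rfl | rfl
        · simp at ht; omega
        · rfl
      · exfalso
        have : 3 * k * 2 ≤ 3 * k * t := Nat.mul_le_mul_left _ h
        omega
    rw [ht, ht1, mul_one]
  -- second: the element with odd part k must be 2*k = m
  have hkT : k ∈ T := by
    simp only [hTdef, Finset.mem_filter, Finset.mem_Icc]
    omega
  obtain ⟨t, htS, htk⟩ := hsurj k hkT
  obtain ⟨ht1, ht2⟩ := hSmem t htS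
  have ht0 : t ≠ 0 := by omega
  have hteq : 2 ^ (t.factorization 2) * k = t := by
    rw [← htk]; exact ordCompl2_spec t
  have hv : t.factorization 2 ≤ 1 := by
    by_contra hv
    have h4 : 4 ≤ 2 ^ (t.factorization 2) := by
      calc (4 : ℕ) = 2 ^ 2 := by norm_num
      _ ≤ 2 ^ (t.factorization 2) := Nat.pow_le_pow_right (by norm_num) (by omega)
    have : 4 * k ≤ 2 ^ (t.factorization 2) * k := Nat.mul_le_mul_right _ h4
    omega
  interval_cases h : t.factorization 2
  · -- t = k, contradiction with 3*k ∈ S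
    have htk' : t = k := by simpa using hteq.symm
    exfalso
    apply hprim t htS s hsS (by omega)
    rw [htk', hs3k]
    exact ⟨3, by ring⟩
  · -- t = 2*k = m
    have : t = 2 * k := by norm_num at hteq; omega
    rw [hmk]
    rwa [this] at htS
end

section
/- If q is an odd positive integer with q ≤ 2n/21, or n/10 < q ≤ 2n/15, or n/6 < q ≤ 2n/9, then the interval [n+1, 4n/3] contains an odd multiple of 2q (i.e., a number of the form 2mq with m odd). -/
theorem stmt_11 (n q : ℕ) (hn : 0 < n) (hq : Odd q) (hq0 : 0 < q)
    (h : 21 * q ≤ 2 * n ∨ (n < 10 * q ∧ 15 * q ≤ 2 * n) ∨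
         (n < 6 * q ∧ 9 * q ≤ 2 * n)) :
    ∃ m : ℕ, Odd m ∧ n + 1 ≤ 2 * m * q ∧ 3 * (2 * m * q) ≤ 4 * n := by
  rcases h with h | ⟨h1, h2⟩ | ⟨h1, h2⟩
  · rcases lt_or_ge n (14 * q) with hlt | hge
    · exact ⟨7, by decide, by omega, by omega⟩
    · obtain ⟨k, r, hdm, hmod⟩ : ∃ k r, 2 * q * k + r = n ∧ r < 2 * q :=
        ⟨n / (2 * q), n % (2 * q), Nat.div_add_mod n (2 * q), Nat.mod_lt n (by omega)⟩
      have hle : k * (2 * q) ≤ n := by nlinarith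
      have hlt2 : n < (k + 1) * (2 * q) := by nlinarith
      rcases Nat.even_or_odd k with he | ho
      · obtain ⟨t, ht⟩ := he
        exact ⟨k + 1, ⟨t, by omega⟩, by nlinarith, by nlinarith⟩
      · obtain ⟨t, ht⟩ := ho
        exact ⟨k + 2, ⟨t + 1, by omega⟩, by nlinarith, by nlinarith⟩
  · exact ⟨5, by decide, by omega, by omega⟩
  · exact ⟨3, by decide, by omega, by omega⟩
end

section
/- No primitive subset of {1,...,2n} with exactly n elements contains any integer congruent to 2 modulo 4 lying in [1, 4n/21], (n/5, 4n/15], or (n/3, 4n/9]. -/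
open Finset

lemma card_odds (n : ℕ) :
    ((Finset.Icc 1 (2 * n)).filter (fun k => k % 2 = 1)).card = n := by
  have h : (Finset.Icc 1 (2 * n)).filter (fun k => k % 2 = 1)
      = Finset.image (fun k => 2 * k + 1) (Finset.range n) := by
    ext x
    simp only [mem_filter, mem_Icc, mem_image, mem_range]
    constructor
    · rintro ⟨⟨h1, h2⟩, h3⟩
      exact ⟨x / 2, by omega, by omega⟩
    · rintro ⟨k, hk, rfl⟩
      omega
  rw [h, Finset.card_image_of_injective _ (fun a b h => by omega),
    Finset.card_range]

lemma oddPart_surj (n : ℕ) (S : Finset ℕ)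
    (hS : S ⊆ Finset.Icc 1 (2 * n)) (hcard : S.card = n)
    (hprim : ∀ u ∈ S, ∀ v ∈ S, u ≠ v → ¬ u ∣ v)
    (q : ℕ) (hq : q % 2 = 1) (hq2 : q ≤ 2 * n) :
    ∃ s ∈ S, ordCompl[2] s = q := by
  set T := (Finset.Icc 1 (2 * n)).filter (fun k => k % 2 = 1) with hT
  have hne : ∀ s ∈ S, s ≠ 0 := by
    intro s hs
    have := hS hs
    simp [mem_Icc] at this
    omega
  have hsub : Finset.image (fun s => ordCompl[2] s) S ⊆ T := by
    intro x hx
    simp only [mem_image] at hx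
    obtain ⟨s, hs, rfl⟩ := hx
    have hs0 : s ≠ 0 := hne s hs
    have h1 : 0 < ordCompl[2] s := Nat.ordCompl_pos 2 hs0
    have h2 : ordCompl[2] s ∣ s := Nat.ordCompl_dvd s 2
    have h3 : s ≤ 2 * n := by have := hS hs; simp [mem_Icc] at this; omega
    have h4 : ¬ 2 ∣ ordCompl[2] s := Nat.not_dvd_ordCompl Nat.prime_two hs0
    simp only [hT, mem_filter, mem_Icc]
    refine ⟨⟨h1, le_trans (Nat.le_of_dvd (by omega) h2) h3⟩, ?_⟩
    omega
  have hinj : Set.InjOn (fun s => ordCompl[2] s) S := by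
    intro a ha b hb hab
    by_contra hne'
    have ha0 : a ≠ 0 := hne a ha
    have hb0 : b ≠ 0 := hne b hb
    have hea : 2 ^ (a.factorization 2) * ordCompl[2] a = a :=
      Nat.ordProj_mul_ordCompl_eq_self a 2
    have heb : 2 ^ (b.factorization 2) * ordCompl[2] b = b :=
      Nat.ordProj_mul_ordCompl_eq_self b 2
    simp only at hab
    rcases le_or_gt (a.factorization 2) (b.factorization 2) with h | h
    · have : a ∣ b := by
        rw [← hea, ← heb, hab]
        exact mul_dvd_mul (pow_dvd_pow 2 h) dvd_rfl
      exact hprim a ha b hb hne' this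
    · have : b ∣ a := by
        rw [← hea, ← heb, hab]
        exact mul_dvd_mul (pow_dvd_pow 2 h.le) dvd_rfl
      exact hprim b hb a ha (Ne.symm hne') this
  have hcardim : (Finset.image (fun s => ordCompl[2] s) S).card = n := by
    rw [Finset.card_image_of_injOn hinj, hcard]
  have heq : Finset.image (fun s => ordCompl[2] s) S = T := by
    apply Finset.eq_of_subset_of_card_le hsub
    rw [hcardim, hT, card_odds]
  have hqT : q ∈ T := by
    simp only [hT, mem_filter, mem_Icc]
    exact ⟨⟨by omega, hq2⟩, hq⟩
  rw [← heq, mem_image] at hqT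
  obtain ⟨s, hs, hsq⟩ := hqT
  exact ⟨s, hs, hsq⟩

theorem stmt_13 (n : ℕ) (hn : 0 < n) (S : Finset ℕ)
    (hS : S ⊆ Finset.Icc 1 (2 * n)) (hcard : S.card = n)
    (hprim : ∀ u ∈ S, ∀ v ∈ S, u ≠ v → ¬ u ∣ v) :
    ∀ m : ℕ, m % 4 = 2 →
      ((1 ≤ m ∧ 21 * m ≤ 4 * n) ∨ (n < 5 * m ∧ 15 * m ≤ 4 * n) ∨
       (n < 3 * m ∧ 9 * m ≤ 4 * n)) → m ∉ S := by
  intro m hm4 hcase hmS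
  have h9 : 9 * m ≤ 4 * n := by omega
  obtain ⟨q, hq⟩ : ∃ q, m = 2 * q ∧ q % 2 = 1 := ⟨m / 2, by omega, by omega⟩
  obtain ⟨hmq, hqodd⟩ := hq
  have hq1 : 1 ≤ q := by omega
  have h9q : 9 * q ≤ 2 * n := by omega
  -- get s with odd part 3q
  obtain ⟨s, hsS, hs3q⟩ := oddPart_surj n S hS hcard hprim (3 * q)
    (by omega) (by omega)
  have hs0 : s ≠ 0 := by
    have := hS hsS; simp [mem_Icc] at this; omega
  have hes : 2 ^ (s.factorization 2) * (3 * q) = s := by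
    rw [← hs3q]; exact Nat.ordProj_mul_ordCompl_eq_self s 2
  -- show s = 3q
  have hseq : s = 3 * q := by
    by_contra hne
    have hfac : 1 ≤ s.factorization 2 := by
      rcases Nat.eq_zero_or_pos (s.factorization 2) with h | h
      · exfalso; apply hne; rw [← hes, h]; ring
      · exact h
    have hdvd : m ∣ s := by
      rw [← hes, hmq]
      have : (2 : ℕ) ∣ 2 ^ (s.factorization 2) := dvd_pow_self 2 (by omega)
      obtain ⟨c, hc⟩ := this
      rw [hc]
      exact ⟨c * 3, by ring⟩
    have hms : m ≠ s := by
      intro h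
      have : ordCompl[2] m = 3 * q := by rw [h, hs3q]
      have hm0 : m ≠ 0 := by omega
      have : m < ordCompl[2] m * 2 := by
        rw [this]; omega
      have hle : ordCompl[2] m ∣ m := Nat.ordCompl_dvd m 2
      have := Nat.le_of_dvd (by omega) hle
      omega
    exact hprim m hmS s hsS hms hdvd
  -- get t with odd part 9q
  obtain ⟨t, htS, ht9q⟩ := oddPart_surj n S hS hcard hprim (9 * q)
    (by omega) (by omega)
  have hdvd2 : s ∣ t := by
    rw [hseq]
    calc (3 * q : ℕ) ∣ 9 * q := ⟨3, by ring⟩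
      _ ∣ t := by rw [← ht9q]; exact Nat.ordCompl_dvd t 2
  have hst : s ≠ t := by
    intro h
    have h1 : (9 * q : ℕ) ∣ t := by rw [← ht9q]; exact Nat.ordCompl_dvd t 2
    have h2 : t = 3 * q := by rw [← h, hseq]
    have := Nat.le_of_dvd (by omega) h1
    omega
  exact hprim s hsS t htS hst hdvd2
end

section
/- For each integer q with 2n/3 < q ≤ n, the set obtained from {n+1,...,2n} by replacing 2q with q is a primitive subset of {1,...,2n} with n elements; more generally, for any subset T of the integers in (2n/3, n], the set ({n+1,...,2n} \ {2q : q ∈ T}) ∪ T is primitive with n elements. -/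
lemma aux_15 (n : ℕ) (hn : 0 < n) (T : Finset ℕ)
    (hT : ∀ q ∈ T, 2 * n < 3 * q ∧ q ≤ n) :
    (let S := (Finset.Icc (n + 1) (2 * n) \ T.image (fun q => 2 * q)) ∪ T;
     S ⊆ Finset.Icc 1 (2 * n) ∧ S.card = n ∧
     ∀ u ∈ S, ∀ v ∈ S, u ≠ v → ¬ u ∣ v) := by
  intro S
  have hmem : ∀ x, x ∈ S ↔
      ((n + 1 ≤ x ∧ x ≤ 2 * n) ∧ x ∉ T.image (fun q => 2 * q)) ∨ x ∈ T := by
    intro x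
    simp [S, Finset.mem_union, Finset.mem_sdiff, Finset.mem_Icc]
  have himg : T.image (fun q => 2 * q) ⊆ Finset.Icc (n + 1) (2 * n) := by
    intro x hx
    simp only [Finset.mem_image] at hx
    obtain ⟨q, hq, rfl⟩ := hx
    obtain ⟨h1, h2⟩ := hT q hq
    simp [Finset.mem_Icc]; omega
  refine ⟨?_, ?_, ?_⟩
  · intro x hx
    rw [hmem] at hx
    simp only [Finset.mem_Icc]
    rcases hx with ⟨⟨h1, h2⟩, -⟩ | h
    · omega
    · obtain ⟨h1, h2⟩ := hT x h; omega
  · have hdisj : Disjoint (Finset.Icc (n + 1) (2 * n) \ T.image (fun q => 2 * q)) T := by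
      rw [Finset.disjoint_right]
      intro x hx hx'
      rw [Finset.mem_sdiff, Finset.mem_Icc] at hx'
      obtain ⟨h1, h2⟩ := hT x hx
      omega
    have hinj : Set.InjOn (fun q => 2 * q) T := by
      intro a _ b _ h; dsimp only at h; omega
    have hcardimg : (T.image (fun q => 2 * q)).card = T.card :=
      Finset.card_image_of_injOn hinj
    have hIcc : (Finset.Icc (n + 1) (2 * n)).card = n := by
      rw [Nat.card_Icc]; omega
    have hle : T.card ≤ n := by
      calc T.card = (T.image (fun q => 2 * q)).card := hcardimg.symm
        _ ≤ (Finset.Icc (n + 1) (2 * n)).card := Finset.card_le_card himg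
        _ = n := hIcc
    have : S.card = (Finset.Icc (n + 1) (2 * n) \ T.image (fun q => 2 * q)).card + T.card :=
      Finset.card_union_of_disjoint hdisj
    rw [this, Finset.card_sdiff_of_subset himg, hcardimg, hIcc]
    omega
  · intro u hu v hv hne hdvd
    rw [hmem] at hu hv
    rcases hu with ⟨⟨hu1, hu2⟩, hu3⟩ | hu
    · rcases hv with ⟨⟨hv1, hv2⟩, hv3⟩ | hv
      · obtain ⟨k, rfl⟩ := hdvd
        rcases Nat.lt_or_ge k 2 with hk | hk
        · interval_cases k <;> omega
        · nlinarith
      · obtain ⟨hv1, hv2⟩ := hT v hv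
        have : u ≤ v := Nat.le_of_dvd (by omega) hdvd
        omega
    · obtain ⟨hu1, hu2⟩ := hT u hu
      rcases hv with ⟨⟨hv1, hv2⟩, hv3⟩ | hv
      · obtain ⟨k, rfl⟩ := hdvd
        have hk2 : k = 2 := by
          rcases Nat.lt_or_ge k 3 with hk | hk
          · interval_cases k <;> omega
          · nlinarith
        subst hk2
        apply hv3
        simp only [Finset.mem_image]
        exact ⟨u, hu, by ring⟩
      · obtain ⟨hv1, hv2⟩ := hT v hv
        obtain ⟨k, rfl⟩ := hdvd
        rcases Nat.lt_or_ge k 2 with hk | hk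
        · interval_cases k <;> omega
        · nlinarith

theorem stmt_15 (n : ℕ) (hn : 0 < n) :
    (∀ q : ℕ, 2 * n < 3 * q → q ≤ n →
      (let S := insert q ((Finset.Icc (n + 1) (2 * n)).erase (2 * q));
       S ⊆ Finset.Icc 1 (2 * n) ∧ S.card = n ∧
       ∀ u ∈ S, ∀ v ∈ S, u ≠ v → ¬ u ∣ v)) ∧
    ∀ T : Finset ℕ, (∀ q ∈ T, 2 * n < 3 * q ∧ q ≤ n) →
      (let S := (Finset.Icc (n + 1) (2 * n) \ T.image (fun q => 2 * q)) ∪ T;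
       S ⊆ Finset.Icc 1 (2 * n) ∧ S.card = n ∧
       ∀ u ∈ S, ∀ v ∈ S, u ≠ v → ¬ u ∣ v) := by
  constructor
  · intro q hq1 hq2
    have hT : ∀ r ∈ ({q} : Finset ℕ), 2 * n < 3 * r ∧ r ≤ n := by
      intro r hr; simp at hr; subst hr; exact ⟨hq1, hq2⟩
    have h := aux_15 n hn {q} hT
    have hset : (Finset.Icc (n + 1) (2 * n) \ ({q} : Finset ℕ).image (fun q => 2 * q)) ∪ {q}
        = insert q ((Finset.Icc (n + 1) (2 * n)).erase (2 * q)) := by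
      ext x
      simp [Finset.mem_union, Finset.mem_sdiff, Finset.mem_erase, Finset.mem_insert]
      tauto
    rw [hset] at h
    exact h
  · exact fun T hT => aux_15 n hn T hT
end

section
/- If D(n) denotes the number of primitive subsets of {1,...,2n} with exactly n elements, then D(n) ≥ 2^{floor(n/3)}. -/
theorem stmt_16 (n : ℕ) (hn : 0 < n) :
    2 ^ (n / 3) ≤ ((Finset.Icc 1 (2 * n)).powerset.filter
      (fun S => S.card = n ∧ ∀ u ∈ S, ∀ v ∈ S, u ≠ v → ¬ u ∣ v)).card := by
  classical
  have key2 : ∀ u v : ℕ, u ∣ v → u ≠ v → 0 < v → 2 * u ≤ v := by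
    rintro u v ⟨c, rfl⟩ hne hpos
    rcases c with _ | _ | c
    · simp at hpos
    · simp at hne
    · nlinarith
  have key3 : ∀ u v : ℕ, u ∣ v → 2 * u < v → 3 * u ≤ v := by
    rintro u v ⟨c, rfl⟩ h
    rcases c with _ | _ | _ | c
    · omega
    · omega
    · omega
    · nlinarith
  set K : Finset ℕ := Finset.Ioc (2 * n / 3) n with hKdef
  set f : Finset ℕ → Finset ℕ :=
    fun T => (Finset.Ioc n (2 * n) \ T.image (fun k => 2 * k)) ∪ T with hfdef
  have hrec : ∀ T ∈ K.powerset, T = (f T).filter (· ≤ n) := by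
    intro T hT
    rw [Finset.mem_powerset] at hT
    ext a
    simp only [Finset.mem_filter, hfdef, Finset.mem_union, Finset.mem_sdiff,
      Finset.mem_Ioc]
    constructor
    · intro ha
      have := hT ha
      rw [hKdef, Finset.mem_Ioc] at this
      exact ⟨Or.inr ha, this.2⟩
    · rintro ⟨h | h, hle⟩
      · omega
      · exact h
  have hmem : ∀ T ∈ K.powerset, f T ∈ ((Finset.Icc 1 (2 * n)).powerset.filter
      (fun S => S.card = n ∧ ∀ u ∈ S, ∀ v ∈ S, u ≠ v → ¬ u ∣ v)) := by
    intro T hT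
    rw [Finset.mem_powerset] at hT
    have hTfact : ∀ k ∈ T, 2 * n / 3 < k ∧ k ≤ n := by
      intro k hk
      have := hT hk
      rw [hKdef, Finset.mem_Ioc] at this
      exact this
    rw [Finset.mem_filter, Finset.mem_powerset]
    refine ⟨?_, ?_, ?_⟩
    · intro a ha
      rw [hfdef] at ha
      simp only [Finset.mem_union, Finset.mem_sdiff, Finset.mem_Ioc] at ha
      rcases ha with ⟨⟨h1, h2⟩, _⟩ | h
      · exact Finset.mem_Icc.mpr ⟨by omega, h2⟩
      · have := hTfact _ h
        exact Finset.mem_Icc.mpr ⟨by omega, by omega⟩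
    · have himg : T.image (fun k => 2 * k) ⊆ Finset.Ioc n (2 * n) := by
        intro a ha
        rw [Finset.mem_image] at ha
        obtain ⟨k, hk, rfl⟩ := ha
        have := hTfact _ hk
        rw [Finset.mem_Ioc]
        omega
      have hdisj : Disjoint (Finset.Ioc n (2 * n) \ T.image (fun k => 2 * k)) T := by
        rw [Finset.disjoint_left]
        intro a ha haT
        rw [Finset.mem_sdiff, Finset.mem_Ioc] at ha
        have := hTfact _ haT
        omega
      rw [hfdef]
      rw [Finset.card_union_of_disjoint hdisj,
        Finset.card_sdiff_of_subset himg,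
        Finset.card_image_of_injective _ (fun a b hab => by simp at hab; omega),
        Nat.card_Ioc]
      have hcard : T.card ≤ n := by
        calc T.card ≤ K.card := Finset.card_le_card hT
        _ = n - 2 * n / 3 := by rw [hKdef, Nat.card_Ioc]
        _ ≤ n := Nat.sub_le _ _
      omega
    · intro u hu v hv huv hdvd
      rw [hfdef, Finset.mem_union, Finset.mem_sdiff, Finset.mem_Ioc] at hu hv
      rcases hu with ⟨⟨hu1, hu2⟩, hunimg⟩ | huT
      · rcases hv with ⟨⟨hv1, hv2⟩, _⟩ | hvT
        · have := key2 u v hdvd huv (by omega)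
          omega
        · have hvf := hTfact _ hvT
          have := Nat.le_of_dvd (by omega) hdvd
          omega
      · have huf := hTfact _ huT
        have hu3 : 2 * n < 3 * u := by omega
        rcases hv with ⟨⟨hv1, hv2⟩, hvnimg⟩ | hvT
        · have h2 := key2 u v hdvd huv (by omega)
          have hne2 : v ≠ 2 * u := by
            rintro rfl
            exact hvnimg (Finset.mem_image.mpr ⟨u, huT, by ring⟩)
          have h3 := key3 u v hdvd (by omega)
          omega
        · have hvf := hTfact _ hvT
          have h2 := key2 u v hdvd huv (by omega)
          omega
  have hinj : Set.InjOn f K.powerset := by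
    intro T1 h1 T2 h2 heq
    rw [hrec T1 h1, hrec T2 h2, heq]
  have hle := Finset.card_le_card_of_injOn f hmem hinj
  rw [Finset.card_powerset] at hle
  calc 2 ^ (n / 3) ≤ 2 ^ K.card := by
        apply Nat.pow_le_pow_right (by norm_num)
        rw [hKdef, Nat.card_Ioc]; omega
    _ ≤ _ := hle
end

section
/- For each even integer q with n/2 < q ≤ 2n/3, and each of the three choices of pair P ∈ {{2q,3q}, {q, 3q/2}, {2q, 3q/2}}, the set obtained from {n+1,...,2n} by removing {2q, 3q} and inserting P is a primitive subset of {1,...,2n} with n elements. -/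
lemma div_cases_aux (u v : ℕ) (h : u ∣ v) :
    v = 0 ∨ v = u ∨ v = 2 * u ∨ v = 3 * u ∨ 4 * u ≤ v := by
  obtain ⟨k, rfl⟩ := h
  rcases Nat.lt_or_ge k 4 with hk | hk
  · interval_cases k <;> omega
  · have := Nat.mul_le_mul_left u hk
    omega

theorem stmt_18 (n q : ℕ) (hn : 0 < n) (hq : Even q) (h1 : n < 2 * q)
    (h2 : 3 * q ≤ 2 * n) (P : Finset ℕ)
    (hP : P = {2 * q, 3 * q} ∨ P = {q, 3 * (q / 2)} ∨ P = {2 * q, 3 * (q / 2)}) :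
    let S := (Finset.Icc (n + 1) (2 * n) \ {2 * q, 3 * q}) ∪ P;
    S ⊆ Finset.Icc 1 (2 * n) ∧ S.card = n ∧
    ∀ u ∈ S, ∀ v ∈ S, u ≠ v → ¬ u ∣ v := by
  rw [Nat.even_iff] at hq
  intro S
  have hS : S = (Finset.Icc (n + 1) (2 * n) \ {2 * q, 3 * q}) ∪ P := rfl
  rw [hS]
  have hsub2 : ({2 * q, 3 * q} : Finset ℕ) ⊆ Finset.Icc (n + 1) (2 * n) := by
    intro x hx
    simp only [Finset.mem_insert, Finset.mem_singleton] at hx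
    rw [Finset.mem_Icc]; omega
  have hcards : (Finset.Icc (n + 1) (2 * n) \ {2 * q, 3 * q}).card = n - 2 := by
    rw [Finset.card_sdiff_of_subset hsub2, Finset.card_pair (by omega : 2 * q ≠ 3 * q),
      Nat.card_Icc]
    omega
  rcases hP with rfl | rfl | rfl
  · refine ⟨?_, ?_, ?_⟩
    · intro x hx
      simp only [Finset.mem_union, Finset.mem_sdiff, Finset.mem_insert,
        Finset.mem_singleton, Finset.mem_Icc] at hx
      rw [Finset.mem_Icc]; omega
    · rw [Finset.card_union_of_disjoint (by
        rw [Finset.disjoint_right]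
        intro a ha hb
        simp only [Finset.mem_insert, Finset.mem_singleton] at ha
        simp only [Finset.mem_sdiff, Finset.mem_insert, Finset.mem_singleton,
          Finset.mem_Icc] at hb
        omega), hcards, Finset.card_pair (by omega : 2 * q ≠ 3 * q)]
      omega
    · intro u hu v hv hne hdvd
      simp only [Finset.mem_union, Finset.mem_sdiff, Finset.mem_insert,
        Finset.mem_singleton, Finset.mem_Icc] at hu hv
      have := div_cases_aux u v hdvd
      omega
  · refine ⟨?_, ?_, ?_⟩
    · intro x hx
      simp only [Finset.mem_union, Finset.mem_sdiff, Finset.mem_insert,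
        Finset.mem_singleton, Finset.mem_Icc] at hx
      rw [Finset.mem_Icc]; omega
    · rw [Finset.card_union_of_disjoint (by
        rw [Finset.disjoint_right]
        intro a ha hb
        simp only [Finset.mem_insert, Finset.mem_singleton] at ha
        simp only [Finset.mem_sdiff, Finset.mem_insert, Finset.mem_singleton,
          Finset.mem_Icc] at hb
        omega), hcards, Finset.card_pair (by omega : q ≠ 3 * (q / 2))]
      omega
    · intro u hu v hv hne hdvd
      simp only [Finset.mem_union, Finset.mem_sdiff, Finset.mem_insert,
        Finset.mem_singleton, Finset.mem_Icc] at hu hv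
      have := div_cases_aux u v hdvd
      omega
  · refine ⟨?_, ?_, ?_⟩
    · intro x hx
      simp only [Finset.mem_union, Finset.mem_sdiff, Finset.mem_insert,
        Finset.mem_singleton, Finset.mem_Icc] at hx
      rw [Finset.mem_Icc]; omega
    · rw [Finset.card_union_of_disjoint (by
        rw [Finset.disjoint_right]
        intro a ha hb
        simp only [Finset.mem_insert, Finset.mem_singleton] at ha
        simp only [Finset.mem_sdiff, Finset.mem_insert, Finset.mem_singleton,
          Finset.mem_Icc] at hb
        omega), hcards, Finset.card_pair (by omega : 2 * q ≠ 3 * (q / 2))]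
      omega
    · intro u hu v hv hne hdvd
      simp only [Finset.mem_union, Finset.mem_sdiff, Finset.mem_insert,
        Finset.mem_singleton, Finset.mem_Icc] at hu hv
      have := div_cases_aux u v hdvd
      omega
end

section
/- If D(n) denotes the number of primitive subsets of {1,...,2n} with exactly n elements, then for all sufficiently large n, D(n) ≥ 2^{n/4 - 2} * 3^{n/12 - 2} (so D(n) grows at least like (1.303...)^n). -/
/-!
Start from the primitive set `(n, 2n]` and replace each element of a set `T` of even numbers of
`(n, 2n]` by its half. This keeps `n` elements, and any divisibility `u ∣ v` in the new set must
have `u` a halved element and `v ∈ {2u, 3u}` an untouched one. Since `2u ∈ T` was removed, the new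
set is primitive as soon as `T` is closed under `2m ↦ 3m` inside `(n, 2n]`.

Closed sets `T` arise from independent choices: any `2x` with `x ∈ (2n/3, n]` (then `3x > 2n`),
except `x = 3v` with `v ∈ (n/4, n/3]`; for those `v`, the chain `4v ↦ 6v` contributes `∅`, `{6v}` or
`{4v, 6v}`. This gives about `n/4` binary and `n/12` ternary choices.
-/

open Finset

def IsPrimitive (S : Finset ℕ) : Prop := ∀ u ∈ S, ∀ v ∈ S, u ≠ v → ¬ u ∣ v

instance : DecidablePred IsPrimitive := fun S =>
  inferInstanceAs (Decidable (∀ u ∈ S, ∀ v ∈ S, u ≠ v → ¬ u ∣ v))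

def halveTop (n : ℕ) (T : Finset ℕ) : Finset ℕ := (Ioc n (2 * n) \ T) ∪ T.image (· / 2)

section halveTop

variable {n : ℕ} {T : Finset ℕ}

lemma mem_halveTop (hE : ∀ t ∈ T, 2 ∣ t) {y : ℕ} :
    y ∈ halveTop n T ↔ (n < y ∧ y ≤ 2 * n ∧ y ∉ T) ∨ 2 * y ∈ T := by
  simp only [halveTop, mem_union, mem_sdiff, mem_Ioc, mem_image, and_assoc]
  refine or_congr_right ⟨?_, fun h => ⟨2 * y, h, by omega⟩⟩
  rintro ⟨t, ht, rfl⟩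
  rwa [Nat.mul_div_cancel' (hE t ht)]

lemma card_halveTop (hT : T ⊆ Ioc n (2 * n)) (hE : ∀ t ∈ T, 2 ∣ t) : #(halveTop n T) = n := by
  have hdisj : Disjoint (Ioc n (2 * n) \ T) (T.image (· / 2)) := by
    simp only [disjoint_left, mem_sdiff, mem_Ioc, mem_image, not_exists, not_and]
    intro y hy t ht hty
    have := mem_Ioc.1 (hT ht)
    omega
  have hinj : Set.InjOn (· / 2) (T : Set ℕ) := by
    intro s hs t ht hst
    have := hE s hs
    have := hE t ht
    simp only at hst
    omega
  have hcard := card_le_card hT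
  rw [Nat.card_Ioc] at hcard
  rw [halveTop, card_union_of_disjoint hdisj, card_sdiff_of_subset hT, card_image_of_injOn hinj,
    Nat.card_Ioc]
  omega

lemma halveTop_subset_Icc (hT : T ⊆ Ioc n (2 * n)) (hE : ∀ t ∈ T, 2 ∣ t) :
    halveTop n T ⊆ Icc 1 (2 * n) := by
  intro y hy
  rw [mem_halveTop hE] at hy
  rw [mem_Icc]
  rcases hy with hy | hy
  · omega
  · have := mem_Ioc.1 (hT hy)
    omega

lemma Ioc_sdiff_halveTop (hT : T ⊆ Ioc n (2 * n)) : Ioc n (2 * n) \ halveTop n T = T := by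
  ext y
  simp only [halveTop, mem_sdiff, mem_union, mem_image, mem_Ioc, not_or, not_and, not_not,
    not_exists]
  constructor
  · rintro ⟨hy, hyT, -⟩
    exact hyT hy
  · intro hy
    have := mem_Ioc.1 (hT hy)
    refine ⟨this, fun _ => hy, fun t ht => ?_⟩
    have := mem_Ioc.1 (hT ht)
    omega

lemma isPrimitive_halveTop (hT : T ⊆ Ioc n (2 * n)) (hE : ∀ t ∈ T, 2 ∣ t)
    (hC : ∀ m, 2 * m ∈ T → 3 * m ≤ 2 * n → 3 * m ∈ T) : IsPrimitive (halveTop n T) := by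
  intro u hu v hv huv ⟨k, hk⟩
  rw [mem_halveTop hE] at hu hv
  have hT' : ∀ {t}, t ∈ T → n < t ∧ t ≤ 2 * n := fun ht => mem_Ioc.1 (hT ht)
  have hbound : ∀ {y}, (n < y ∧ y ≤ 2 * n ∧ y ∉ T) ∨ 2 * y ∈ T → n < 2 * y ∧ y ≤ 2 * n := by
    rintro y (hy | hy)
    · omega
    · have := hT' hy
      omega
  have hu' := hbound hu
  have hv' := hbound hv
  have hk3 : k ≤ 3 := by nlinarith
  interval_cases k
  · omega
  · omega
  · obtain rfl : v = 2 * u := by omega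
    rcases hu with hu | hu
    · omega
    rcases hv with ⟨-, -, hv⟩ | hv
    · exact hv hu
    · have := hT' hv
      omega
  · obtain rfl : v = 3 * u := by omega
    rcases hu with hu | hu
    · omega
    rcases hv with ⟨-, -, hv⟩ | hv
    · exact hv (hC u hu hv'.2)
    · have := hT' hv
      omega

end halveTop

open Classical in
noncomputable def closedEvenSets (n : ℕ) : Finset (Finset ℕ) :=
  (Ioc n (2 * n)).powerset.filter
    (fun T => (∀ t ∈ T, 2 ∣ t) ∧ ∀ m, 2 * m ∈ T → 3 * m ≤ 2 * n → 3 * m ∈ T)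

lemma card_closedEvenSets_le (n : ℕ) :
    #(closedEvenSets n) ≤ #((Icc 1 (2 * n)).powerset.filter (fun S => #S = n ∧ IsPrimitive S)) := by
  refine card_le_card_of_injOn (halveTop n) ?_ ?_
  · intro T hT
    simp only [closedEvenSets, coe_filter, mem_powerset] at hT
    obtain ⟨hT, hE, hC⟩ := hT
    simp only [coe_filter, mem_powerset]
    exact ⟨halveTop_subset_Icc hT hE, card_halveTop hT hE, isPrimitive_halveTop hT hE hC⟩
  · intro T hT T' hT' h
    simp only [closedEvenSets, coe_filter, mem_powerset] at hT hT'
    rw [← Ioc_sdiff_halveTop hT.1, ← Ioc_sdiff_halveTop hT'.1, h]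

def chainStarts (n : ℕ) : Finset ℕ := Ioc (n / 4) (n / 3)

def freeHalves (n : ℕ) : Finset ℕ := Ioc (2 * n / 3) n \ (chainStarts n).image (3 * ·)

lemma mem_chainStarts {n v : ℕ} : v ∈ chainStarts n ↔ n < 4 * v ∧ 3 * v ≤ n := by
  rw [chainStarts, mem_Ioc]
  omega

lemma mem_freeHalves {n x : ℕ} :
    x ∈ freeHalves n ↔ (2 * n < 3 * x ∧ x ≤ n) ∧ ∀ v ∈ chainStarts n, x ≠ 3 * v := by
  simp only [freeHalves, mem_sdiff, mem_Ioc, mem_image, not_exists, not_and]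
  exact and_congr (by omega) (forall₂_congr fun _ _ => ne_comm)

/-- With `B ⊆ A`, the chain `4v ↦ 6v` meets the set in `∅`, `{6v}` or `{4v, 6v}`. -/
def halvingSet (X A B : Finset ℕ) : Finset ℕ :=
  X.image (2 * ·) ∪ A.image (6 * ·) ∪ B.image (4 * ·)

section halvingSet

variable {n : ℕ} {X A B : Finset ℕ}

lemma two_mul_mem_halvingSet (hA : A ⊆ chainStarts n) (hB : B ⊆ chainStarts n) {x : ℕ}
    (hx : x ∈ freeHalves n) : 2 * x ∈ halvingSet X A B ↔ x ∈ X := by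
  rw [mem_freeHalves] at hx
  simp only [halvingSet, mem_union, mem_image]
  refine ⟨?_, fun h => Or.inl (Or.inl ⟨x, h, rfl⟩)⟩
  rintro ((⟨y, hy, hyx⟩ | ⟨v, hv, hvx⟩) | ⟨v, hv, hvx⟩)
  · rwa [show x = y by omega]
  · exact absurd (by omega) (hx.2 v (hA hv))
  · have := mem_chainStarts.1 (hB hv)
    omega

lemma six_mul_mem_halvingSet (hX : X ⊆ freeHalves n) (hB : B ⊆ chainStarts n) {v : ℕ}
    (hv : v ∈ chainStarts n) : 6 * v ∈ halvingSet X A B ↔ v ∈ A := by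
  simp only [halvingSet, mem_union, mem_image]
  refine ⟨?_, fun h => Or.inl (Or.inr ⟨v, h, rfl⟩)⟩
  rintro ((⟨x, hx, hxv⟩ | ⟨w, hw, hwv⟩) | ⟨w, hw, hwv⟩)
  · exact absurd (by omega) ((mem_freeHalves.1 (hX hx)).2 v hv)
  · rwa [show v = w by omega]
  · have := mem_chainStarts.1 hv
    have := mem_chainStarts.1 (hB hw)
    omega

lemma four_mul_mem_halvingSet (hX : X ⊆ freeHalves n) (hA : A ⊆ chainStarts n) {v : ℕ}
    (hv : v ∈ chainStarts n) : 4 * v ∈ halvingSet X A B ↔ v ∈ B := by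
  have := mem_chainStarts.1 hv
  simp only [halvingSet, mem_union, mem_image]
  refine ⟨?_, fun h => Or.inr ⟨v, h, rfl⟩⟩
  rintro ((⟨x, hx, hxv⟩ | ⟨w, hw, hwv⟩) | ⟨w, hw, hwv⟩)
  · have := mem_freeHalves.1 (hX hx)
    omega
  · have := mem_chainStarts.1 (hA hw)
    omega
  · rwa [show v = w by omega]

lemma halvingSet_mem_closedEvenSets (hX : X ⊆ freeHalves n) (hA : A ⊆ chainStarts n)
    (hBA : B ⊆ A) : halvingSet X A B ∈ closedEvenSets n := by
  have hX' : ∀ x ∈ X, 2 * n < 3 * x ∧ x ≤ n := fun x hx => (mem_freeHalves.1 (hX hx)).1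
  have hA' : ∀ v ∈ A, n < 4 * v ∧ 3 * v ≤ n := fun v hv => mem_chainStarts.1 (hA hv)
  simp only [closedEvenSets, halvingSet, mem_filter, mem_powerset, mem_union, mem_image]
  refine ⟨?_, ?_, ?_⟩
  · intro t ht
    simp only [mem_union, mem_image] at ht
    rw [mem_Ioc]
    rcases ht with (⟨x, hx, rfl⟩ | ⟨v, hv, rfl⟩) | ⟨v, hv, rfl⟩
    · have := hX' x hx; omega
    · have := hA' v hv; omega
    · have := hA' v (hBA hv); omega
  · rintro t ((⟨x, -, rfl⟩ | ⟨v, -, rfl⟩) | ⟨v, -, rfl⟩) <;> omega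
  · rintro m ((⟨x, hx, hxm⟩ | ⟨v, hv, hvm⟩) | ⟨v, hv, hvm⟩) hm
    · have := hX' x hx; omega
    · have := hA' v hv; omega
    · exact Or.inl (Or.inr ⟨v, hBA hv, by omega⟩)

lemma halvingSet_injOn :
    Set.InjOn (fun p : Finset ℕ × (_ : Finset ℕ) × Finset ℕ => halvingSet p.1 p.2.1 p.2.2)
      ↑((freeHalves n).powerset ×ˢ (chainStarts n).powerset.sigma powerset) := by
  have recover : ∀ {s t : Finset ℕ} {p : ℕ → Prop} [DecidablePred p], t ⊆ s →
      (∀ x ∈ s, p x ↔ x ∈ t) → s.filter p = t := fun hts h => by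
    rw [filter_congr h, filter_mem_eq_inter, inter_eq_right.2 hts]
  rintro ⟨X, A, B⟩ h ⟨X', A', B'⟩ h' heq
  simp only [coe_product, coe_sigma, Set.mem_prod, Set.mem_sigma_iff, mem_coe,
    mem_powerset] at h h' heq
  obtain ⟨hX, hA, hBA⟩ := h
  obtain ⟨hX', hA', hBA'⟩ := h'
  obtain rfl : X = X' := by
    rw [← recover hX fun x => two_mul_mem_halvingSet hA (hBA.trans hA),
      ← recover hX' fun x => two_mul_mem_halvingSet hA' (hBA'.trans hA'), heq]
  obtain rfl : A = A' := by
    rw [← recover hA fun v => six_mul_mem_halvingSet hX (hBA.trans hA),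
      ← recover hA' fun v => six_mul_mem_halvingSet hX (hBA'.trans hA'), heq]
  obtain rfl : B = B' := by
    rw [← recover (hBA.trans hA) fun v => four_mul_mem_halvingSet hX hA,
      ← recover (hBA'.trans hA) fun v => four_mul_mem_halvingSet hX hA, heq]
  rfl

end halvingSet

lemma card_powerset_product_sigma_powerset {α β : Type*} (H : Finset α) (V : Finset β) :
    #(H.powerset ×ˢ V.powerset.sigma powerset) = 2 ^ #H * 3 ^ #V := by
  rw [card_product, card_powerset, card_sigma]
  simpa using sum_pow_mul_eq_add_pow (2 : ℕ) 1 V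

lemma two_pow_mul_three_pow_le_card_closedEvenSets (n : ℕ) :
    2 ^ #(freeHalves n) * 3 ^ #(chainStarts n) ≤ #(closedEvenSets n) := by
  rw [← card_powerset_product_sigma_powerset]
  refine card_le_card_of_injOn _ ?_ halvingSet_injOn
  rintro ⟨X, A, B⟩ h
  simp only [coe_product, coe_sigma, Set.mem_prod, Set.mem_sigma_iff, mem_coe,
    mem_powerset] at h
  exact halvingSet_mem_closedEvenSets h.1 h.2.1 h.2.2

lemma card_chainStarts (n : ℕ) : #(chainStarts n) = n / 3 - n / 4 := Nat.card_Ioc _ _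

lemma card_freeHalves (n : ℕ) : #(freeHalves n) = (n - 2 * n / 3) - (n / 3 - n / 4) := by
  have hsub : (chainStarts n).image (3 * ·) ⊆ Ioc (2 * n / 3) n := by
    intro x hx
    obtain ⟨v, hv, rfl⟩ := mem_image.1 hx
    have := mem_chainStarts.1 hv
    rw [mem_Ioc]
    omega
  rw [freeHalves, card_sdiff_of_subset hsub, Nat.card_Ioc,
    card_image_of_injective _ (mul_right_injective₀ three_ne_zero), card_chainStarts]

theorem stmt_19 (D : ℕ → ℕ)
    (hD : ∀ n, D n = ((Finset.Icc 1 (2 * n)).powerset.filter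
      (fun S => S.card = n ∧ ∀ u ∈ S, ∀ v ∈ S, u ≠ v → ¬ u ∣ v)).card) :
    ∃ N : ℕ, ∀ n : ℕ, N ≤ n →
      (2 : ℝ) ^ ((n : ℝ) / 4 - 2) * (3 : ℝ) ^ ((n : ℝ) / 12 - 2) ≤ (D n : ℝ) := by
  refine ⟨0, fun n _ => ?_⟩
  have hfree : (n : ℝ) / 4 - 2 ≤ #(freeHalves n) := by
    have : n ≤ 4 * #(freeHalves n) + 4 := by rw [card_freeHalves]; omega
    have : (n : ℝ) ≤ 4 * #(freeHalves n) + 4 := by exact_mod_cast this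
    linarith
  have hchain : (n : ℝ) / 12 - 2 ≤ #(chainStarts n) := by
    have : n ≤ 12 * #(chainStarts n) + 8 := by rw [card_chainStarts]; omega
    have : (n : ℝ) ≤ 12 * #(chainStarts n) + 8 := by exact_mod_cast this
    linarith
  have hcount := (two_pow_mul_three_pow_le_card_closedEvenSets n).trans
    (card_closedEvenSets_le n)
  calc (2 : ℝ) ^ ((n : ℝ) / 4 - 2) * (3 : ℝ) ^ ((n : ℝ) / 12 - 2)
      ≤ (2 : ℝ) ^ (#(freeHalves n) : ℝ) * (3 : ℝ) ^ (#(chainStarts n) : ℝ) := by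
        gcongr <;> norm_num
    _ ≤ D n := by
        rw [Real.rpow_natCast, Real.rpow_natCast, hD n]
        exact_mod_cast hcount
end
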